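/- Let g : ℕ → ℕ be a nondecreasing function with infinite signature (c_j, I_j)_{j≥0}, and let S_k(i) be the associated truncated sums. Then for all natural numbers t < k: S_k(t) ≥ ∑_{i≤t} |I_{k−i}|·2^{−c_{k−i}} − 1. -/

import Mathlib

/-- `IsSignature g c n` says that `(c j, [n j, n (j+1)))` is the signature of the
nondecreasing function `g`: the intervals `I j = [n j, n (j+1))` partition `ℕ`, they are
the maximal intervals on which `g` is constant (with value `c j`), and `c` is strictly
increasing (so the signature is infinite). -/
def IsSignature (g : ℕ → ℕ) (c : ℕ → ℕ) (n : ℕ → ℕ) : Prop :=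
  n 0 = 0 ∧ StrictMono n ∧ StrictMono c ∧
    ∀ j x, n j ≤ x → x < n (j + 1) → g x = c j

/-- `x` truncated to its first `c` binary digits. -/
def trunc (x : ℚ) (c : ℕ) : ℚ := (⌊x * 2 ^ c⌋ : ℚ) / 2 ^ c

/-- The truncated sums `S_k i` associated with a signature with values `c j` and interval
sizes `sz j`. -/
def truncS (c : ℕ → ℕ) (sz : ℕ → ℕ) (k : ℕ) : ℕ → ℚ
  | 0 => trunc ((sz k : ℚ) / 2 ^ c k) (c (k - 1))
  | i + 1 => trunc ((sz (k - (i + 1)) : ℚ) / 2 ^ c (k - (i + 1)) + truncS c sz k i)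
      (c (k - (i + 1) - 1))

lemma trunc_ge (a b : ℕ) (hba : b ≤ a) (m : ℤ) :
    trunc ((m : ℚ) / 2 ^ a) b ≥ (m : ℚ) / 2 ^ a - 1 / 2 ^ b + 1 / 2 ^ a := by
  unfold trunc
  set d : ℕ := 2 ^ (a - b) with hd
  have hdpos : (0 : ℤ) < (d : ℤ) := by positivity
  have h2a : (2 : ℚ) ^ a = 2 ^ b * (d : ℚ) := by
    push_cast [hd, ← pow_add]; congr 1; omega
  have hfl : ⌊(m : ℚ) / 2 ^ a * 2 ^ b⌋ = m / (d : ℤ) := by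
    have hx : (m : ℚ) / 2 ^ a * 2 ^ b = (m : ℚ) / (d : ℚ) := by
      rw [h2a]; field_simp
    rw [hx, Rat.floor_intCast_div_natCast]
  rw [hfl]
  set q : ℤ := m / (d : ℤ)
  set r : ℤ := m % (d : ℤ)
  have hm : m = (d : ℤ) * q + r := (Int.mul_ediv_add_emod m d).symm
  have hr0 : 0 ≤ r := Int.emod_nonneg m (by positivity)
  have hr1 : r < (d : ℤ) := Int.emod_lt_of_pos m hdpos
  have hmQ : (m : ℚ) = (d : ℚ) * q + r := by exact_mod_cast congrArg (fun z : ℤ => (z : ℚ)) hm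
  have hb : (0:ℚ) < 2 ^ b := by positivity
  have hdq : (0:ℚ) < (d:ℚ) := by exact_mod_cast hdpos
  have hrQ : (r : ℚ) + 1 ≤ (d : ℚ) := by exact_mod_cast hr1
  rw [hmQ, h2a, ge_iff_le, ← sub_nonneg]
  have heq : (q : ℚ) / 2 ^ b - (((d : ℚ) * q + r) / (2 ^ b * d) - 1 / 2 ^ b + 1 / (2 ^ b * d))
      = ((d : ℚ) - (r + 1)) / (2 ^ b * d) := by
    field_simp
    ring
  rw [heq]
  exact div_nonneg (by linarith) (by positivity)

lemma truncS_int (c : ℕ → ℕ) (sz : ℕ → ℕ) (k i : ℕ) :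
    ∃ m : ℤ, truncS c sz k i = (m : ℚ) / 2 ^ c (k - i - 1) := by
  cases i with
  | zero => exact ⟨_, rfl⟩
  | succ i => exact ⟨_, rfl⟩

lemma truncS_ge (c : ℕ → ℕ) (sz : ℕ → ℕ) (hc : Monotone c) (k : ℕ) (t : ℕ) (htk : t < k) :
    truncS c sz k t ≥
      (∑ i ∈ Finset.range (t + 1), (sz (k - i) : ℚ) / 2 ^ c (k - i))
        - 1 / 2 ^ c (k - t - 1) + 1 / 2 ^ c k := by
  induction t with
  | zero =>
    have h1 : (k : ℕ) - 0 = k := rfl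
    simp only [Finset.sum_range_one, h1]
    have hba : c (k - 0 - 1) ≤ c k := hc (by omega)
    have := trunc_ge (c k) (c (k - 0 - 1)) hba (sz k)
    simpa [truncS] using this
  | succ t ih =>
    have ih' := ih (by omega)
    obtain ⟨m, hm⟩ := truncS_int c sz k t
    -- input of the next truncation
    set a := c (k - t - 1)
    set b := c (k - (t + 1) - 1)
    have hkt : k - (t + 1) = k - t - 1 := by omega
    have hba : b ≤ a := hc (by omega)
    have hx : (sz (k - (t + 1)) : ℚ) / 2 ^ c (k - (t + 1)) + truncS c sz k t
        = ((sz (k - (t + 1)) + m : ℤ) : ℚ) / 2 ^ a := by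
      rw [hm, hkt]
      push_cast
      ring
    have key := trunc_ge a b hba ((sz (k - (t + 1)) : ℤ) + m)
    rw [← hx] at key
    have hstep : truncS c sz k (t + 1) ≥
        (sz (k - (t + 1)) : ℚ) / 2 ^ c (k - (t + 1)) + truncS c sz k t
          - 1 / 2 ^ b + 1 / 2 ^ a := key
    rw [Finset.sum_range_succ]
    have hsum : (∑ i ∈ Finset.range (t + 1), (sz (k - i) : ℚ) / 2 ^ c (k - i))
        - 1 / 2 ^ a + 1 / 2 ^ c k ≤ truncS c sz k t := ih'
    calc (∑ i ∈ Finset.range (t + 1), (sz (k - i) : ℚ) / 2 ^ c (k - i))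
          + (sz (k - (t + 1)) : ℚ) / 2 ^ c (k - (t + 1)) - 1 / 2 ^ b + 1 / 2 ^ c k
        ≤ (sz (k - (t + 1)) : ℚ) / 2 ^ c (k - (t + 1)) + truncS c sz k t
            - 1 / 2 ^ b + 1 / 2 ^ a := by linarith
      _ ≤ truncS c sz k (t + 1) := hstep

/-- Lower bounds on truncated sums: `S_k t ≥ ∑_{i ≤ t} |I_(k-i)|·2^(-c_(k-i)) - 1`. -/
theorem stmt17 (g c n : ℕ → ℕ) (hg : Monotone g) (hsig : IsSignature g c n)
    (k t : ℕ) (htk : t < k) :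
    truncS c (fun j => n (j + 1) - n j) k t ≥
      (∑ i ∈ Finset.range (t + 1), ((n (k - i + 1) - n (k - i) : ℕ) : ℚ) / 2 ^ c (k - i))
        - 1 := by
  have hc : Monotone c := hsig.2.2.1.monotone
  have h := truncS_ge c (fun j => n (j + 1) - n j) hc k t htk
  have h1 : (1 : ℚ) / 2 ^ c (k - t - 1) ≤ 1 := by
    rw [div_le_one (by positivity)]
    exact_mod_cast Nat.one_le_two_pow
  have h2 : (0 : ℚ) ≤ 1 / 2 ^ c k := by positivity
  linarith
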